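/- arXiv:1907.09323 — 2 statements merged into one kernel-verified Lean document; each statement's English description precedes it below -/
import Mathlib

section
/- Let p be a real polynomial and α a real root of p of even multiplicity d ≥ 2. Let γ(t) = (α + ξ(t), α + μ(t)) with ξ(t) = t + O(t²) and μ(t) = m·t + O(t²) where m ≠ -1. Then N(γ(t))/D(γ(t)) → α as t → 0, where D(x,y) = (p(x)-p(y))/(x-y) and N(x,y) = y·D(x,y) - p(y). -/
open Filter Asymptotics Polynomial Finset

/-- The divided difference polynomial `q(x,y)`, denominator `D` of the secant map. -/
noncomputable def secQ (p : Polynomial ℝ) (x y : ℝ) : ℝ :=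
  ∑ m ∈ Finset.Icc 1 p.natDegree,
    p.coeff m * ∑ ℓ ∈ Finset.range m, x ^ (m - 1 - ℓ) * y ^ ℓ

/-- The numerator `N(x,y) = y D(x,y) - p(y)` of the second component of the secant map. -/
noncomputable def secN (p : Polynomial ℝ) (x y : ℝ) : ℝ :=
  y * secQ p x y - p.eval y

lemma secQ_inner (x y : ℝ) (m : ℕ) :
    (∑ ℓ ∈ Finset.range m, x ^ (m - 1 - ℓ) * y ^ ℓ) =
      ∑ i ∈ Finset.range m, x ^ i * y ^ (m - 1 - i) := by
  rw [← Finset.sum_range_reflect (fun i => x ^ i * y ^ (m - 1 - i)) m]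
  refine Finset.sum_congr rfl fun ℓ hℓ => ?_
  rw [Finset.mem_range] at hℓ
  congr 1
  congr 1
  omega

lemma sub_mul_secQ (p : Polynomial ℝ) (x y : ℝ) :
    secQ p x y * (x - y) = p.eval x - p.eval y := by
  conv_rhs => rw [eval_eq_sum_range (p := p) x, eval_eq_sum_range (p := p) y]
  rw [← Finset.sum_sub_distrib]
  rw [secQ, Finset.sum_mul]
  rw [show Finset.range (p.natDegree + 1) = insert 0 (Finset.Icc 1 p.natDegree) by
    ext i; simp [Finset.mem_range, Finset.mem_Icc]; omega]
  rw [Finset.sum_insert (by simp)]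
  simp only [pow_zero, sub_self, mul_zero, zero_add]
  refine Finset.sum_congr rfl fun m hm => ?_
  rw [secQ_inner, mul_assoc, geom_sum₂_mul, mul_sub]

lemma continuous_secQ (p : Polynomial ℝ) :
    Continuous (fun z : ℝ × ℝ => secQ p z.1 z.2) := by
  unfold secQ
  fun_prop

lemma dense_offDiag : Dense {z : ℝ × ℝ | z.1 ≠ z.2} := by
  intro z
  rcases eq_or_ne z.1 z.2 with h | h
  · have t1 : Filter.Tendsto (fun n : ℕ => ((z.1 + 1 / (n + 1), z.2) : ℝ × ℝ))
        atTop (nhds z) := by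
      rw [show z = (z.1, z.2) by simp]
      refine Filter.Tendsto.prodMk_nhds ?_ tendsto_const_nhds
      have : Filter.Tendsto (fun n : ℕ => 1 / ((n : ℝ) + 1)) atTop (nhds 0) :=
        tendsto_one_div_add_atTop_nhds_zero_nat
      simpa using (tendsto_const_nhds (x := z.1)).add this
    refine mem_closure_of_tendsto t1 ?_
    filter_upwards with n
    show z.1 + 1 / ((n:ℝ) + 1) ≠ z.2
    have hp : (0:ℝ) < 1 / ((n:ℝ) + 1) := by positivity
    rw [← h]; intro hc; nlinarith [hc]
  · exact subset_closure h

set_option maxHeartbeats 2000000 in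
lemma secQ_taylor (p : Polynomial ℝ) (α u v : ℝ) :
    secQ p (α + u) (α + v) = secQ (Polynomial.taylor α p) u v := by
  have hc1 : Continuous (fun z : ℝ × ℝ => secQ p (α + z.1) (α + z.2)) := by
    have : Continuous (fun z : ℝ × ℝ => ((α + z.1, α + z.2) : ℝ × ℝ)) := by fun_prop
    exact (continuous_secQ p).comp this
  have hc2 : Continuous (fun z : ℝ × ℝ => secQ (Polynomial.taylor α p) z.1 z.2) :=
    continuous_secQ _
  have heq : Set.EqOn (fun z : ℝ × ℝ => secQ p (α + z.1) (α + z.2))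
      (fun z : ℝ × ℝ => secQ (Polynomial.taylor α p) z.1 z.2) {z : ℝ × ℝ | z.1 ≠ z.2} := by
    intro z hz
    have hz' : z.1 - z.2 ≠ 0 := sub_ne_zero.mpr hz
    have h1 := sub_mul_secQ p (α + z.1) (α + z.2)
    have h2 := sub_mul_secQ (Polynomial.taylor α p) z.1 z.2
    rw [taylor_eval, taylor_eval] at h2
    have e1 : (α + z.1) - (α + z.2) = z.1 - z.2 := by ring
    rw [e1] at h1
    have h3 : z.1 + α = α + z.1 := by ring
    have h4 : z.2 + α = α + z.2 := by ring
    rw [h3, h4] at h2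
    exact mul_right_cancel₀ hz' (h1.trans h2.symm)
  have := hc1.ext_on dense_offDiag hc2 heq
  exact congrFun this (u, v)

lemma iteratedDeriv_polyEval (p : Polynomial ℝ) (n : ℕ) :
    iteratedDeriv n (fun t => p.eval t) = fun t => ((derivative)^[n] p).eval t := by
  induction n with
  | zero => simp
  | succ n ih =>
    rw [iteratedDeriv_succ, ih]
    funext t
    rw [Function.iterate_succ_apply']
    exact Polynomial.deriv (p := (derivative)^[n] p)

lemma taylor_coeff_eval (p : Polynomial ℝ) (α : ℝ) (j : ℕ) :
    (j.factorial : ℝ) * (Polynomial.taylor α p).coeff j = iteratedDeriv j (fun t => p.eval t) α := by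
  rw [iteratedDeriv_polyEval, taylor_coeff]
  have h := congrFun (Polynomial.factorial_smul_hasseDeriv (R := ℝ) j) p
  simp only [LinearMap.smul_apply] at h
  rw [← h, nsmul_eq_mul]
  push_cast
  rw [Polynomial.eval_mul, Polynomial.eval_natCast]

lemma div_tendsto_of_isBigO {f : ℝ → ℝ} {c : ℝ}
    (h : (fun t => f t - c * t) =O[nhds 0] fun t => t ^ 2) :
    Tendsto (fun t => f t / t) (nhdsWithin 0 {(0:ℝ)}ᶜ) (nhds c) := by
  have h1 : (fun t : ℝ => (f t - c * t) * t⁻¹) =O[nhdsWithin 0 {(0:ℝ)}ᶜ]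
      fun t => t ^ 2 * t⁻¹ :=
    (h.mono nhdsWithin_le_nhds).mul (isBigO_refl _ _)
  have h2 : (fun t : ℝ => (f t - c * t) * t⁻¹) =O[nhdsWithin 0 {(0:ℝ)}ᶜ] fun t => t := by
    refine h1.trans (IsBigO.of_bound 1 ?_)
    filter_upwards [self_mem_nhdsWithin] with t ht
    have ht' : (t:ℝ) ≠ 0 := ht
    rw [pow_two, mul_assoc, mul_inv_cancel₀ ht', mul_one, one_mul]
  have h3 : Tendsto (fun t : ℝ => (f t - c * t) * t⁻¹) (nhdsWithin 0 {(0:ℝ)}ᶜ) (nhds 0) :=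
    h2.trans_tendsto (tendsto_id.mono_left nhdsWithin_le_nhds)
  have h4 : Tendsto (fun t : ℝ => (f t - c * t) * t⁻¹ + c) (nhdsWithin 0 {(0:ℝ)}ᶜ) (nhds c) := by
    simpa using h3.add (tendsto_const_nhds (x := c))
  refine h4.congr' ?_
  filter_upwards [self_mem_nhdsWithin] with t ht
  have ht' : (t:ℝ) ≠ 0 := ht
  field_simp
  ring

lemma tendsto_zero_of_isBigO {f : ℝ → ℝ} {c : ℝ}
    (h : (fun t => f t - c * t) =O[nhds 0] fun t => t ^ 2) :
    Tendsto f (nhds 0) (nhds 0) := by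
  have h1 : Tendsto (fun t : ℝ => f t - c * t) (nhds 0) (nhds 0) :=
    h.trans_tendsto (by simpa using (continuous_pow 2).tendsto (0:ℝ))
  have h2 : Tendsto (fun t : ℝ => c * t) (nhds 0) (nhds 0) := by
    simpa using (tendsto_const_nhds (x := c)).mul (tendsto_id (x := nhds (0:ℝ)))
  simpa using h1.add h2

lemma pow_div_eq {T : ℝ} (X M : ℝ) (hT : T ≠ 0) (a b c e : ℕ) (h : a + b = c + e) :
    X ^ a * M ^ b / T ^ c = (X / T) ^ a * (M / T) ^ b * T ^ e := by
  rw [div_pow, div_pow, div_mul_div_comm, div_mul_eq_mul_div, ← pow_add, h, pow_add,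
    mul_div_mul_right _ _ (pow_ne_zero e hT)]

lemma geom_ne_zero {m : ℝ} {d : ℕ} (hd : d ≠ 0) (heven : Even d) (hm : m ≠ -1) :
    (∑ ℓ ∈ Finset.range d, m ^ ℓ) ≠ 0 := by
  by_cases h1 : m = 1
  · subst h1
    simp only [one_pow, Finset.sum_const, Finset.card_range, nsmul_eq_mul, mul_one]
    exact_mod_cast hd
  · intro h0
    have hgs := geom_sum_mul m d
    rw [h0, zero_mul] at hgs
    have hmd : m ^ d = 1 := by linarith
    have habs : |m| = 1 := by
      have := abs_pow_eq_one m hd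
      rw [hmd, abs_one] at this
      exact this.mp rfl
    rcases (abs_eq zero_le_one).mp habs with h | h
    · exact h1 h
    · exact hm h

/-- Let `α` be a real root of `p` of even multiplicity `d ≥ 2` and let
`γ(t) = (α + ξ(t), α + μ(t))` be a smooth curve with `ξ(t) = t + O(t²)`,
`μ(t) = m t + O(t²)`, `m ≠ -1`. Then `N(γ(t))/D(γ(t)) → α` as `t → 0`. -/
theorem secant_limit_even_multiplicity (p : Polynomial ℝ) (α : ℝ) (d : ℕ)
    (hd2 : 2 ≤ d) (heven : Even d)
    (hroot : ∀ j : ℕ, j < d → iteratedDeriv j (fun t => p.eval t) α = 0)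
    (hd0 : iteratedDeriv d (fun t => p.eval t) α ≠ 0)
    (m : ℝ) (hm : m ≠ -1) (ξ μ : ℝ → ℝ)
    (hξs : ContDiff ℝ (⊤ : ℕ∞) ξ) (hμs : ContDiff ℝ (⊤ : ℕ∞) μ)
    (hξ : (fun t => ξ t - t) =O[nhds 0] fun t => t ^ 2)
    (hμ : (fun t => μ t - m * t) =O[nhds 0] fun t => t ^ 2) :
    Tendsto (fun t => secN p (α + ξ t) (α + μ t) / secQ p (α + ξ t) (α + μ t))
      (nhdsWithin 0 {(0 : ℝ)}ᶜ) (nhds α) := by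
  set q := Polynomial.taylor α p with hqdef
  set k := p.natDegree with hkdef
  set l := nhdsWithin (0:ℝ) {(0:ℝ)}ᶜ with hldef
  have hkq : q.natDegree = k := natDegree_taylor p α
  have hcoeff : ∀ j, j < d → q.coeff j = 0 := by
    intro j hj
    have h := taylor_coeff_eval p α j
    rw [hroot j hj] at h
    have hfac : (j.factorial : ℝ) ≠ 0 := by
      exact_mod_cast j.factorial_ne_zero
    rcases mul_eq_zero.mp h with h' | h'
    · exact absurd h' hfac
    · exact h'
  have hcd : q.coeff d ≠ 0 := by
    intro h0
    apply hd0
    rw [← taylor_coeff_eval, ← hqdef, h0, mul_zero]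
  have hdk : d ≤ k := by
    rw [← hkq]
    exact le_natDegree_of_ne_zero hcd
  have hd1 : 1 ≤ d := by omega
  have hmem : ∀ᶠ t in l, t ≠ 0 := eventually_mem_nhdsWithin
  have hξq : Tendsto (fun t => ξ t / t) l (nhds 1) :=
    div_tendsto_of_isBigO (by simpa using hξ)
  have hμq : Tendsto (fun t => μ t / t) l (nhds m) := div_tendsto_of_isBigO hμ
  have hμ0' : Tendsto μ l (nhds 0) :=
    (tendsto_zero_of_isBigO hμ).mono_left nhdsWithin_le_nhds
  set H := ∑ ℓ ∈ Finset.range d, m ^ ℓ with hHdef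
  have hL : q.coeff d * H ≠ 0 :=
    mul_ne_zero hcd (geom_ne_zero (by omega) heven hm)
  -- Claim C
  have claimC : Tendsto (fun t => secQ q (ξ t) (μ t) / t ^ (d-1)) l
      (nhds (q.coeff d * H)) := by
    have hsum : (∑ mm ∈ Finset.Icc 1 k, (if mm = d then q.coeff d * H else 0))
        = q.coeff d * H := by
      rw [Finset.sum_ite_eq' (Finset.Icc 1 k) d (fun _ => q.coeff d * H)]
      rw [if_pos (Finset.mem_Icc.mpr ⟨hd1, hdk⟩)]
    rw [← hsum]
    have expand : ∀ t : ℝ, (∑ mm ∈ Finset.Icc 1 k, q.coeff mm *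
          ∑ ℓ ∈ Finset.range mm, (ξ t ^ (mm - 1 - ℓ) * μ t ^ ℓ / t ^ (d-1)))
        = secQ q (ξ t) (μ t) / t ^ (d-1) := by
      intro t
      rw [secQ, hkq, Finset.sum_div]
      refine Finset.sum_congr rfl fun mm hmm => ?_
      rw [mul_div_assoc, Finset.sum_div]
    refine Tendsto.congr expand (tendsto_finset_sum _ fun mm hmm => ?_)
    rw [Finset.mem_Icc] at hmm
    rcases lt_or_ge mm d with hlt | hge
    · have hz : q.coeff mm = 0 := hcoeff mm hlt
      rw [if_neg (by omega : ¬ mm = d)]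
      simp only [hz, zero_mul]
      exact tendsto_const_nhds
    · have hterm : ∀ ℓ ∈ Finset.range mm,
          Tendsto (fun t => ξ t ^ (mm - 1 - ℓ) * μ t ^ ℓ / t ^ (d-1)) l
            (nhds ((1:ℝ) ^ (mm - 1 - ℓ) * m ^ ℓ * (0:ℝ) ^ (mm - d))) := by
        intro ℓ hℓ
        rw [Finset.mem_range] at hℓ
        have h1 : Tendsto
            (fun t => (ξ t / t) ^ (mm - 1 - ℓ) * (μ t / t) ^ ℓ * t ^ (mm - d)) l
            (nhds ((1:ℝ) ^ (mm - 1 - ℓ) * m ^ ℓ * (0:ℝ) ^ (mm - d))) := by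
          refine ((hξq.pow _).mul (hμq.pow _)).mul ?_
          exact ((continuous_pow (mm - d)).tendsto 0).mono_left nhdsWithin_le_nhds
        refine Tendsto.congr' ?_ h1
        filter_upwards [hmem] with t ht
        exact (pow_div_eq (ξ t) (μ t) ht _ _ _ _ (by omega)).symm
      have h2 := (tendsto_const_nhds (α := ℝ) (x := q.coeff mm)
        (f := l)).mul (tendsto_finset_sum _ hterm)
      rcases eq_or_lt_of_le hge with heq | hgt
      · rw [if_pos heq.symm]
        subst heq
        convert h2 using 2
        simp only [Nat.sub_self, pow_zero, one_pow, mul_one, one_mul, hHdef]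
      · rw [if_neg (by omega : ¬ mm = d)]
        convert h2 using 2
        rw [zero_pow (by omega : mm - d ≠ 0)]
        simp
  -- Claim D
  have claimD : Tendsto (fun t => q.eval (μ t) / t ^ (d-1)) l (nhds 0) := by
    have expand : ∀ t : ℝ, (∑ j ∈ Finset.range (k+1), q.coeff j * μ t ^ j / t ^ (d-1))
        = q.eval (μ t) / t ^ (d-1) := by
      intro t
      rw [eval_eq_sum_range, hkq, Finset.sum_div]
    rw [show (0:ℝ) = ∑ j ∈ Finset.range (k+1), (0:ℝ) by simp]
    refine Tendsto.congr expand (tendsto_finset_sum _ fun j hj => ?_)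
    rcases lt_or_ge j d with hlt | hge
    · simp only [hcoeff j hlt, zero_mul, zero_div]
      exact tendsto_const_nhds
    · have h1 : Tendsto (fun t => q.coeff j * ((μ t / t) ^ (d-1) * μ t ^ (j - (d-1)))) l
          (nhds (q.coeff j * (m ^ (d-1) * (0:ℝ) ^ (j - (d-1))))) :=
        tendsto_const_nhds.mul ((hμq.pow _).mul (hμ0'.pow _))
      rw [zero_pow (by omega : j - (d-1) ≠ 0), mul_zero, mul_zero] at h1
      refine Tendsto.congr' ?_ h1
      filter_upwards [hmem] with t ht
      have hμj : μ t ^ j = μ t ^ (d-1) * μ t ^ (j - (d-1)) := by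
        rw [← pow_add]
        congr 1
        omega
      rw [div_pow, hμj, mul_div_assoc]
      field_simp
  -- combine
  have hFne : ∀ᶠ t in l, secQ q (ξ t) (μ t) ≠ 0 := by
    filter_upwards [claimC.eventually_ne hL] with t ht h0
    exact ht (by rw [h0, zero_div])
  have hdiv : Tendsto (fun t => q.eval (μ t) / secQ q (ξ t) (μ t)) l (nhds 0) := by
    have h := claimD.div claimC hL
    rw [zero_div] at h
    refine Tendsto.congr' ?_ h
    filter_upwards [hmem] with t ht
    have htc : (t:ℝ) ^ (d-1) ≠ 0 := pow_ne_zero _ ht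
    show (fun t => q.eval (μ t) / t ^ (d-1)) t / ((fun t => secQ q (ξ t) (μ t) / t ^ (d-1)) t)
      = q.eval (μ t) / secQ q (ξ t) (μ t)
    simp only []
    rw [div_div_div_cancel_right₀ htc]
  have hμα : Tendsto (fun t => α + μ t) l (nhds α) := by
    simpa using (tendsto_const_nhds (α := ℝ) (x := α) (f := l)).add hμ0'
  have final : Tendsto (fun t => (α + μ t) - q.eval (μ t) / secQ q (ξ t) (μ t)) l
      (nhds α) := by
    simpa using hμα.sub hdiv
  refine Tendsto.congr' ?_ final
  filter_upwards [hFne] with t hF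
  rw [secN, secQ_taylor p α (ξ t) (μ t), ← hqdef,
    show p.eval (α + μ t) = q.eval (μ t) by rw [hqdef, taylor_eval, add_comm],
    sub_div, mul_div_cancel_right₀ _ hF]
end

section
/- Let p be a real polynomial and α a root of multiplicity d ≥ 2 with d odd. Then for all sufficiently small ξ, μ ∈ ℝ with (ξ,μ) ≠ (0,0) and q(α+ξ, α+μ) ≠ 0, the secant map satisfies dist(S(α+ξ, α+μ), (α,α)) ≤ dist((α+ξ, α+μ), (α,α)), where dist is the Euclidean distance on ℝ² and S(x,y) = (y, α + N₁(x,y)/q(x,y)) with N₁(x,y) = y·q(x,y) - p(y) - α·q(x,y). -/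
/-! ### Auxiliary: the homogeneous divided difference `σ_e(x,y) = ∑_{i+j=e} x^i y^j` -/

noncomputable def secSigma (e : ℕ) (x y : ℝ) : ℝ :=
  ∑ ℓ ∈ Finset.range (e + 1), x ^ (e - ℓ) * y ^ ℓ

lemma secSigma_reflect (e : ℕ) (x y : ℝ) :
    secSigma e x y = ∑ i ∈ Finset.range (e + 1), x ^ i * y ^ (e - i) := by
  unfold secSigma
  rw [← Finset.sum_range_reflect (fun i => x ^ i * y ^ (e - i)) (e + 1)]
  refine Finset.sum_congr rfl fun ℓ hℓ => ?_
  simp only [Finset.mem_range] at hℓ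
  congr 1 <;> congr 1 <;> omega

lemma secSigma_symm (e : ℕ) (x y : ℝ) : secSigma e x y = secSigma e y x := by
  rw [secSigma_reflect]
  unfold secSigma
  exact Finset.sum_congr rfl fun ℓ hℓ => by ring

lemma secSigma_mul (e : ℕ) (x y : ℝ) :
    (x - y) * secSigma e x y = x ^ (e + 1) - y ^ (e + 1) := by
  rw [secSigma_reflect]
  have h := (Commute.all x y).mul_geom_sum₂ (e + 1)
  simpa using h

lemma secSigma_diag (e : ℕ) (x : ℝ) : secSigma e x x = ((e : ℝ) + 1) * x ^ e := by
  unfold secSigma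
  have h : ∀ ℓ ∈ Finset.range (e + 1), x ^ (e - ℓ) * x ^ ℓ = x ^ e := fun ℓ hℓ => by
    rw [← pow_add]; congr 1; simp only [Finset.mem_range] at hℓ; omega
  rw [Finset.sum_congr rfl h, Finset.sum_const, Finset.card_range, nsmul_eq_mul]
  push_cast; ring

lemma secSigma_zero_right (e : ℕ) (x : ℝ) : secSigma e x 0 = x ^ e := by
  unfold secSigma
  rw [Finset.sum_eq_single_of_mem 0 (by simp)]
  · simp
  · intro ℓ _ hℓ; simp [zero_pow hℓ]

lemma secSigma_abs_le (e : ℕ) {x y M : ℝ} (hx : |x| ≤ M) (hy : |y| ≤ M) :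
    |secSigma e x y| ≤ ((e : ℝ) + 1) * M ^ e := by
  have hM : 0 ≤ M := le_trans (abs_nonneg x) hx
  calc |secSigma e x y| ≤ ∑ ℓ ∈ Finset.range (e + 1), |x ^ (e - ℓ) * y ^ ℓ| :=
        Finset.abs_sum_le_sum_abs _ _
    _ ≤ ∑ _ℓ ∈ Finset.range (e + 1), M ^ e := by
        refine Finset.sum_le_sum fun ℓ hℓ => ?_
        simp only [Finset.mem_range] at hℓ
        rw [abs_mul, abs_pow, abs_pow]
        calc |x| ^ (e - ℓ) * |y| ^ ℓ ≤ M ^ (e - ℓ) * M ^ ℓ :=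
              mul_le_mul (pow_le_pow_left₀ (abs_nonneg x) hx _)
                (pow_le_pow_left₀ (abs_nonneg y) hy _)
                (pow_nonneg (abs_nonneg y) _) (pow_nonneg hM _)
          _ = M ^ e := by rw [← pow_add]; congr 1; omega
    _ = ((e : ℝ) + 1) * M ^ e := by
        rw [Finset.sum_const, Finset.card_range, nsmul_eq_mul]; push_cast; ring

lemma secSigma_succ_left (e : ℕ) (x y : ℝ) :
    secSigma (e + 1) x y = x ^ (e + 1) + y * secSigma e x y := by
  unfold secSigma
  rw [Finset.sum_range_succ' (fun ℓ => x ^ (e + 1 - ℓ) * y ^ ℓ) (e + 1), Finset.mul_sum,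
    add_comm]
  congr 1
  · simp
  · refine Finset.sum_congr rfl fun ℓ hℓ => ?_
    have h : e + 1 - (ℓ + 1) = e - ℓ := by omega
    rw [h, pow_succ]; ring

lemma two_secSigma_ge_aux {e : ℕ} (he : Even e) {x y : ℝ} (h : y < x) :
    x ^ e + y ^ e ≤ 2 * secSigma e x y := by
  have h1 := secSigma_mul e x y
  have key : (x - y) * (2 * secSigma e x y - x ^ e - y ^ e) = (x + y) * (x ^ e - y ^ e) := by
    linear_combination 2 * h1
  have hpos : 0 ≤ (x + y) * (x ^ e - y ^ e) := by
    rcases le_or_gt 0 (x + y) with hxy | hxy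
    · have hyx : |y| ≤ x := abs_le.mpr ⟨by linarith, h.le⟩
      have hye : y ^ e ≤ x ^ e := by
        rw [← he.pow_abs y]
        exact pow_le_pow_left₀ (abs_nonneg y) hyx e
      exact mul_nonneg hxy (by linarith)
    · have hxy' : |x| ≤ -y := abs_le.mpr ⟨by linarith, by linarith⟩
      have hxe : x ^ e ≤ y ^ e := by
        rw [← he.pow_abs x, ← he.neg_pow y]
        exact pow_le_pow_left₀ (abs_nonneg x) hxy' e
      have h9 := mul_nonneg (neg_nonneg.2 hxy.le) (sub_nonneg.2 hxe)
      nlinarith [h9]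
  nlinarith [key, hpos, sub_pos.mpr h]

lemma two_secSigma_ge {e : ℕ} (he : Even e) (x y : ℝ) :
    x ^ e + y ^ e ≤ 2 * secSigma e x y := by
  rcases lt_trichotomy x y with h | h | h
  · have h2 := two_secSigma_ge_aux he h
    rw [secSigma_symm]; linarith
  · subst h
    rw [secSigma_diag]
    have h1 : (0 : ℝ) ≤ x ^ e := he.pow_nonneg x
    have h2 : (0 : ℝ) ≤ (e : ℝ) := Nat.cast_nonneg e
    nlinarith
  · exact two_secSigma_ge_aux he h

lemma secSigma_margin {e : ℕ} (he : Even e) (he1 : 1 ≤ e) (x y : ℝ) :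
    (max |x| |y| / (4 * (e : ℝ))) ^ e ≤ 2 * secSigma e x y - x ^ e := by
  set M := max |x| |y| with hMdef
  have hM0 : 0 ≤ M := le_trans (abs_nonneg x) (le_max_left _ _)
  have hxM : |x| ≤ M := le_max_left _ _
  have hyM : |y| ≤ M := le_max_right _ _
  have heR : (1 : ℝ) ≤ (e : ℝ) := by exact_mod_cast he1
  rcases le_or_gt (M / (4 * (e : ℝ))) |y| with hy | hy
  · have h2 := two_secSigma_ge he x y
    have h3 : (M / (4 * (e : ℝ))) ^ e ≤ y ^ e := by
      rw [← he.pow_abs y]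
      exact pow_le_pow_left₀ (by positivity) hy e
    have h4 : (0 : ℝ) ≤ x ^ e := he.pow_nonneg x
    linarith
  · have hMx : M = |x| := by
      rcases max_choice |x| |y| with h | h
      · exact h
      · exfalso
        have hd : M / (4 * (e : ℝ)) ≤ M := div_le_self hM0 (by linarith)
        have hMy : M = |y| := by rw [hMdef, h]
        rw [hMy] at hy hd
        linarith
    obtain ⟨e', rfl⟩ : ∃ e', e = e' + 1 := ⟨e - 1, by omega⟩
    have hE : (0 : ℝ) < (e' : ℝ) + 1 := by positivity
    have hcast : ((e' + 1 : ℕ) : ℝ) = (e' : ℝ) + 1 := by push_cast; ring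
    have h1 := secSigma_succ_left e' x y
    have habs := secSigma_abs_le e' hxM hyM
    have hxe : x ^ (e' + 1) = M ^ (e' + 1) := by
      rw [hMx, he.pow_abs x]
    have hy' : |y| ≤ M / (4 * ((e' : ℝ) + 1)) := by
      rw [hcast] at hy; exact hy.le
    have t1 : |y * secSigma e' x y| ≤ (M / (4 * ((e' : ℝ) + 1))) * (((e' : ℝ) + 1) * M ^ e') := by
      rw [abs_mul]
      exact mul_le_mul hy' habs (abs_nonneg _) (by positivity)
    have t2 : (M / (4 * ((e' : ℝ) + 1))) * (((e' : ℝ) + 1) * M ^ e') = M ^ (e' + 1) / 4 := by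
      field_simp
      ring
    have t3 : -(M ^ (e' + 1) / 2) ≤ 2 * (y * secSigma e' x y) := by
      have := neg_abs_le (y * secSigma e' x y)
      rw [t2] at t1
      linarith
    have h7 : (2 : ℝ) ≤ (4 * ((e' : ℝ) + 1)) ^ (e' + 1) := by
      calc (2 : ℝ) ≤ 4 * ((e' : ℝ) + 1) := by linarith
        _ ≤ (4 * ((e' : ℝ) + 1)) ^ (e' + 1) := le_self_pow₀ (by linarith) (by omega)
    have t4 : (M / (4 * ((e' : ℝ) + 1))) ^ (e' + 1) ≤ M ^ (e' + 1) / 2 := by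
      rw [div_pow]
      exact div_le_div_of_nonneg_left (pow_nonneg hM0 _) (by norm_num) h7
    rw [hcast]
    rw [h1] at *
    linarith [t4, t3, hxe]

/-! ### The divided difference identity for `secQ` -/

lemma secQ_mul (p : Polynomial ℝ) (x y : ℝ) :
    (x - y) * secQ p x y = p.eval x - p.eval y := by
  unfold secQ
  rw [Finset.mul_sum]
  have h1 : ∀ m ∈ Finset.Icc 1 p.natDegree,
      (x - y) * (p.coeff m * ∑ ℓ ∈ Finset.range m, x ^ (m - 1 - ℓ) * y ^ ℓ)
        = p.coeff m * (x ^ m - y ^ m) := by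
    intro m hm
    simp only [Finset.mem_Icc] at hm
    obtain ⟨e, rfl⟩ : ∃ e, m = e + 1 := ⟨m - 1, by omega⟩
    have h2 : ∑ ℓ ∈ Finset.range (e + 1), x ^ (e + 1 - 1 - ℓ) * y ^ ℓ = secSigma e x y := by
      unfold secSigma
      exact Finset.sum_congr rfl fun ℓ _ => by norm_num
    rw [h2]
    linear_combination p.coeff (e + 1) * secSigma_mul e x y
  rw [Finset.sum_congr rfl h1]
  have hsub : Finset.Icc 1 p.natDegree ⊆ Finset.range (p.natDegree + 1) := fun m hm => by
    simp only [Finset.mem_Icc] at hm; simp only [Finset.mem_range]; omega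
  have hzero : ∀ m ∈ Finset.range (p.natDegree + 1), m ∉ Finset.Icc 1 p.natDegree →
      p.coeff m * (x ^ m - y ^ m) = 0 := by
    intro m hm hm'
    simp only [Finset.mem_range] at hm
    simp only [Finset.mem_Icc, not_and, not_le] at hm'
    have hm0 : m = 0 := by omega
    subst hm0; simp
  rw [Finset.sum_subset hsub hzero]
  rw [Polynomial.eval_eq_sum_range (p := p) x, Polynomial.eval_eq_sum_range (p := p) y,
    ← Finset.sum_sub_distrib]
  exact Finset.sum_congr rfl fun m _ => by ring

/-! ### The Taylor-shifted form of `secQ` -/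

noncomputable def secG (p : Polynomial ℝ) (α ξ μ : ℝ) : ℝ :=
  ∑ m ∈ Finset.Icc 1 p.natDegree, (Polynomial.taylor α p).coeff m * secSigma (m - 1) ξ μ

lemma taylor_eval_sum (p : Polynomial ℝ) (α t : ℝ) :
    p.eval (α + t) = ∑ m ∈ Finset.range (p.natDegree + 1),
      (Polynomial.taylor α p).coeff m * t ^ m := by
  have h := Polynomial.taylor_eval α p t
  rw [Polynomial.eval_eq_sum_range (p := Polynomial.taylor α p) t,
    Polynomial.natDegree_taylor] at h
  rw [add_comm]
  exact h.symm

lemma secG_mul (p : Polynomial ℝ) (α ξ μ : ℝ) :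
    (ξ - μ) * secG p α ξ μ = p.eval (α + ξ) - p.eval (α + μ) := by
  unfold secG
  rw [Finset.mul_sum]
  have h1 : ∀ m ∈ Finset.Icc 1 p.natDegree,
      (ξ - μ) * ((Polynomial.taylor α p).coeff m * secSigma (m - 1) ξ μ)
        = (Polynomial.taylor α p).coeff m * (ξ ^ m - μ ^ m) := by
    intro m hm
    simp only [Finset.mem_Icc] at hm
    obtain ⟨e, rfl⟩ : ∃ e, m = e + 1 := ⟨m - 1, by omega⟩
    have h2 : e + 1 - 1 = e := by omega
    rw [h2]
    linear_combination (Polynomial.taylor α p).coeff (e + 1) * secSigma_mul e ξ μ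
  rw [Finset.sum_congr rfl h1]
  have hsub : Finset.Icc 1 p.natDegree ⊆ Finset.range (p.natDegree + 1) := fun m hm => by
    simp only [Finset.mem_Icc] at hm; simp only [Finset.mem_range]; omega
  have hzero : ∀ m ∈ Finset.range (p.natDegree + 1), m ∉ Finset.Icc 1 p.natDegree →
      (Polynomial.taylor α p).coeff m * (ξ ^ m - μ ^ m) = 0 := by
    intro m hm hm'
    simp only [Finset.mem_range] at hm
    simp only [Finset.mem_Icc, not_and, not_le] at hm'
    have hm0 : m = 0 := by omega
    subst hm0; simp
  rw [Finset.sum_subset hsub hzero]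
  rw [taylor_eval_sum p α ξ, taylor_eval_sum p α μ, ← Finset.sum_sub_distrib]
  exact Finset.sum_congr rfl fun m _ => by ring

lemma secQ_eq_secG (p : Polynomial ℝ) (α ξ μ : ℝ) :
    secQ p (α + ξ) (α + μ) = secG p α ξ μ := by
  have key : ∀ a b : ℝ, a ≠ b → secQ p (α + a) (α + b) = secG p α a b := by
    intro a b hab
    have h1 := secQ_mul p (α + a) (α + b)
    have h2 := secG_mul p α a b
    have h4 : a - b ≠ 0 := sub_ne_zero.mpr hab
    apply mul_left_cancel₀ h4
    rw [h2]
    linear_combination h1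
  rcases eq_or_ne ξ μ with rfl | hne
  · -- diagonal case: continuity
    have hcont1 : Continuous fun t : ℝ => secQ p (α + t) (α + ξ) := by
      unfold secQ
      refine continuous_finset_sum _ fun m _ => Continuous.mul continuous_const ?_
      refine continuous_finset_sum _ fun ℓ _ => ?_
      exact ((continuous_const.add continuous_id).pow _).mul continuous_const
    have hcont2 : Continuous fun t : ℝ => secG p α t ξ := by
      unfold secG secSigma
      refine continuous_finset_sum _ fun m _ => Continuous.mul continuous_const ?_
      refine continuous_finset_sum _ fun ℓ _ => ?_
      exact (continuous_id.pow _).mul continuous_const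
    have heq : (fun t : ℝ => secQ p (α + t) (α + ξ)) =ᶠ[nhdsWithin ξ {ξ}ᶜ]
        fun t : ℝ => secG p α t ξ := by
      filter_upwards [self_mem_nhdsWithin] with t ht
      exact key t ξ ht
    have l1 : Filter.Tendsto (fun t : ℝ => secQ p (α + t) (α + ξ)) (nhdsWithin ξ {ξ}ᶜ)
        (nhds (secQ p (α + ξ) (α + ξ))) :=
      (hcont1.tendsto ξ).mono_left nhdsWithin_le_nhds
    have l2 : Filter.Tendsto (fun t : ℝ => secQ p (α + t) (α + ξ)) (nhdsWithin ξ {ξ}ᶜ)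
        (nhds (secG p α ξ ξ)) :=
      ((hcont2.tendsto ξ).mono_left nhdsWithin_le_nhds).congr' heq.symm
    exact tendsto_nhds_unique l1 l2
  · exact key ξ μ hne

/-! ### Taylor coefficients and iterated derivatives -/

lemma iteratedDeriv_eval_poly (p : Polynomial ℝ) (j : ℕ) :
    iteratedDeriv j (fun t => p.eval t) = fun t => (Polynomial.derivative^[j] p).eval t := by
  induction j with
  | zero => simp [iteratedDeriv_zero]
  | succ n ih =>
    rw [iteratedDeriv_succ, ih]
    funext t
    rw [Function.iterate_succ_apply']
    exact Polynomial.deriv (p := Polynomial.derivative^[n] p)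

lemma taylor_coeff_factorial (p : Polynomial ℝ) (α : ℝ) (m : ℕ) :
    (m.factorial : ℝ) * (Polynomial.taylor α p).coeff m
      = iteratedDeriv m (fun t => p.eval t) α := by
  rw [Polynomial.taylor_coeff, iteratedDeriv_eval_poly]
  show (m.factorial : ℝ) * (Polynomial.hasseDeriv m p).eval α
      = (Polynomial.derivative^[m] p).eval α
  rw [← congrFun (Polynomial.factorial_smul_hasseDeriv (R := ℝ) (k := m)) p,
    LinearMap.smul_apply, Polynomial.eval_smul, nsmul_eq_mul]

/-! ### Decomposition of `secG` and tail bound -/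

lemma secG_decomp (p : Polynomial ℝ) (α : ℝ) (d : ℕ) (hd1 : 1 ≤ d) (hdk : d ≤ p.natDegree)
    (hz : ∀ m, m < d → (Polynomial.taylor α p).coeff m = 0) (a b : ℝ) :
    secG p α a b = (Polynomial.taylor α p).coeff d * secSigma (d - 1) a b
      + ∑ m ∈ Finset.Icc (d + 1) p.natDegree,
          (Polynomial.taylor α p).coeff m * secSigma (m - 1) a b := by
  unfold secG
  have hsub2 : Finset.Icc d p.natDegree ⊆ Finset.Icc 1 p.natDegree := fun m hm => by
    simp only [Finset.mem_Icc] at *; omega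
  have hzero2 : ∀ m ∈ Finset.Icc 1 p.natDegree, m ∉ Finset.Icc d p.natDegree →
      (Polynomial.taylor α p).coeff m * secSigma (m - 1) a b = 0 := by
    intro m hm hm'
    simp only [Finset.mem_Icc] at hm hm'
    have hmd : m < d := by omega
    rw [hz m hmd, zero_mul]
  rw [← Finset.sum_subset hsub2 hzero2, Finset.Icc_eq_cons_Ioc hdk, Finset.sum_cons,
    ← Finset.Icc_add_one_left_eq_Ioc]

lemma tail_bound (p : Polynomial ℝ) (α : ℝ) (d : ℕ) {a b M : ℝ} (ha : |a| ≤ M) (hb : |b| ≤ M)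
    (hM1 : M ≤ 1) :
    |∑ m ∈ Finset.Icc (d + 1) p.natDegree,
        (Polynomial.taylor α p).coeff m * secSigma (m - 1) a b|
      ≤ (∑ m ∈ Finset.Icc (d + 1) p.natDegree,
          |(Polynomial.taylor α p).coeff m| * (m : ℝ)) * M ^ d := by
  have hM0 : 0 ≤ M := le_trans (abs_nonneg a) ha
  calc |∑ m ∈ Finset.Icc (d + 1) p.natDegree,
        (Polynomial.taylor α p).coeff m * secSigma (m - 1) a b|
      ≤ ∑ m ∈ Finset.Icc (d + 1) p.natDegree,
          |(Polynomial.taylor α p).coeff m * secSigma (m - 1) a b| :=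
        Finset.abs_sum_le_sum_abs _ _
    _ ≤ ∑ m ∈ Finset.Icc (d + 1) p.natDegree,
          |(Polynomial.taylor α p).coeff m| * ((m : ℝ) * M ^ d) := by
        refine Finset.sum_le_sum fun m hm => ?_
        simp only [Finset.mem_Icc] at hm
        rw [abs_mul]
        refine mul_le_mul_of_nonneg_left ?_ (abs_nonneg _)
        have hcast : ((m - 1 : ℕ) : ℝ) + 1 = (m : ℝ) := by
          have h1 : m - 1 + 1 = m := by omega
          calc ((m - 1 : ℕ) : ℝ) + 1 = ((m - 1 + 1 : ℕ) : ℝ) := by push_cast; ring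
            _ = (m : ℝ) := by rw [h1]
        calc |secSigma (m - 1) a b| ≤ (((m - 1 : ℕ) : ℝ) + 1) * M ^ (m - 1) :=
              secSigma_abs_le (m - 1) ha hb
          _ = (m : ℝ) * M ^ (m - 1) := by rw [hcast]
          _ ≤ (m : ℝ) * M ^ d := by
              refine mul_le_mul_of_nonneg_left ?_ (Nat.cast_nonneg m)
              exact pow_le_pow_of_le_one hM0 hM1 (by omega)
    _ = (∑ m ∈ Finset.Icc (d + 1) p.natDegree,
          |(Polynomial.taylor α p).coeff m| * (m : ℝ)) * M ^ d := by
        rw [Finset.sum_mul]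
        exact Finset.sum_congr rfl fun m _ => by ring

/-! ### Main theorem -/

set_option maxHeartbeats 2000000 in
/-- Let `α` be a root of `p` of odd multiplicity `d ≥ 2`. Then for all sufficiently small
`(ξ,μ) ≠ (0,0)` with `q(α+ξ, α+μ) ≠ 0`, writing the secant map as
`S(x,y) = (y, α + N₁(x,y)/q(x,y))` with `N₁(x,y) = y q(x,y) - p(y) - α q(x,y)`, one has
`dist(S(α+ξ, α+μ), (α,α)) ≤ dist((α+ξ, α+μ), (α,α))` (Euclidean distance). -/
theorem secant_contraction_odd_multiplicity (p : Polynomial ℝ) (α : ℝ) (d : ℕ)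
    (hd : 2 ≤ d) (hodd : Odd d)
    (hroot : ∀ j : ℕ, j < d → iteratedDeriv j (fun t => p.eval t) α = 0)
    (hd0 : iteratedDeriv d (fun t => p.eval t) α ≠ 0) :
    ∃ ε > (0 : ℝ), ∀ ξ μ : ℝ, (ξ, μ) ≠ ((0 : ℝ), (0 : ℝ)) →
      Real.sqrt (ξ ^ 2 + μ ^ 2) < ε →
      secQ p (α + ξ) (α + μ) ≠ 0 →
      Real.sqrt (μ ^ 2 +
          ((α + ((α + μ) * secQ p (α + ξ) (α + μ) - p.eval (α + μ) -
              α * secQ p (α + ξ) (α + μ)) / secQ p (α + ξ) (α + μ)) - α) ^ 2) ≤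
        Real.sqrt (ξ ^ 2 + μ ^ 2) := by
  obtain ⟨e, rfl⟩ : ∃ e, d = e + 1 := ⟨d - 1, by omega⟩
  have he : Even e := by simpa using Nat.Odd.sub_odd hodd odd_one
  have he1 : 1 ≤ e := by omega
  have heR : (1 : ℝ) ≤ (e : ℝ) := by exact_mod_cast he1
  -- the Taylor coefficients
  have hTzero : ∀ m, m < e + 1 → (Polynomial.taylor α p).coeff m = 0 := by
    intro m hm
    have h := taylor_coeff_factorial p α m
    rw [hroot m hm] at h
    have hfac : (m.factorial : ℝ) ≠ 0 := Nat.cast_ne_zero.mpr m.factorial_ne_zero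
    exact (mul_eq_zero.mp h).resolve_left hfac
  have hc : (Polynomial.taylor α p).coeff (e + 1) ≠ 0 := by
    intro h0
    apply hd0
    rw [← taylor_coeff_factorial p α (e + 1), h0, mul_zero]
  set c := (Polynomial.taylor α p).coeff (e + 1) with hc_def
  have hdk : e + 1 ≤ p.natDegree := by
    have h1 := Polynomial.le_natDegree_of_ne_zero hc
    rwa [Polynomial.natDegree_taylor] at h1
  have hpα : p.eval α = 0 := by
    have h0 := hroot 0 (by omega)
    rw [iteratedDeriv_zero] at h0
    simpa using h0
  set C := ∑ m ∈ Finset.Icc (e + 1 + 1) p.natDegree,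
      |(Polynomial.taylor α p).coeff m| * (m : ℝ) with hC_def
  have hC0 : 0 ≤ C := Finset.sum_nonneg fun m _ =>
    mul_nonneg (abs_nonneg _) (Nat.cast_nonneg m)
  set P := (4 * (e : ℝ)) ^ e with hP_def
  have hP : 0 < P := pow_pos (by linarith) e
  have hc2 : 0 < c ^ 2 := lt_of_le_of_ne (sq_nonneg c) (Ne.symm (pow_ne_zero 2 hc))
  have hden1 : 0 < |c| * C + 1 := by nlinarith [mul_nonneg (abs_nonneg c) hC0]
  have hden2 : 0 < P * (3 * |c| * C + 1) := by
    have h1 : 0 ≤ 3 * |c| * C := by positivity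
    nlinarith
  refine ⟨min 1 (min (c ^ 2 / (|c| * C + 1)) (c ^ 2 / (P * (3 * |c| * C + 1)))),
    lt_min one_pos (lt_min (div_pos hc2 hden1) (div_pos hc2 hden2)), ?_⟩
  intro ξ μ _hne hsmall hQne
  set M := max |ξ| |μ| with hM_def
  have hM0 : 0 ≤ M := le_trans (abs_nonneg ξ) (le_max_left _ _)
  have hxM : |ξ| ≤ M := le_max_left _ _
  have hyM : |μ| ≤ M := le_max_right _ _
  have hMs : M ≤ Real.sqrt (ξ ^ 2 + μ ^ 2) := by
    apply max_le
    · rw [← Real.sqrt_sq_eq_abs]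
      exact Real.sqrt_le_sqrt (by nlinarith [sq_nonneg μ])
    · rw [← Real.sqrt_sq_eq_abs]
      exact Real.sqrt_le_sqrt (by nlinarith [sq_nonneg ξ])
  have hMa : M < 1 := lt_of_le_of_lt hMs (lt_of_lt_of_le hsmall (min_le_left _ _))
  have hMb : M < c ^ 2 / (|c| * C + 1) :=
    lt_of_le_of_lt hMs (lt_of_lt_of_le hsmall ((min_le_right _ _).trans (min_le_left _ _)))
  have hMc : M < c ^ 2 / (P * (3 * |c| * C + 1)) :=
    lt_of_le_of_lt hMs (lt_of_lt_of_le hsmall ((min_le_right _ _).trans (min_le_right _ _)))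
  have hMb' : M * (|c| * C + 1) < c ^ 2 := (lt_div_iff₀ hden1).mp hMb
  have hMc' : M * (P * (3 * |c| * C + 1)) < c ^ 2 := (lt_div_iff₀ hden2).mp hMc
  -- switch from secQ to secG
  have hQG : secQ p (α + ξ) (α + μ) = secG p α ξ μ := secQ_eq_secG p α ξ μ
  rw [hQG] at hQne ⊢
  set Q := secG p α ξ μ with hQ_def
  set A := secG p α ξ 0 with hA_def
  -- decompositions
  have hQ : Q = c * secSigma e ξ μ + ∑ m ∈ Finset.Icc (e + 1 + 1) p.natDegree,
      (Polynomial.taylor α p).coeff m * secSigma (m - 1) ξ μ := by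
    have h := secG_decomp p α (e + 1) (by omega) hdk hTzero ξ μ
    simpa using h
  have hA : A = c * ξ ^ e + ∑ m ∈ Finset.Icc (e + 1 + 1) p.natDegree,
      (Polynomial.taylor α p).coeff m * secSigma (m - 1) ξ 0 := by
    have h := secG_decomp p α (e + 1) (by omega) hdk hTzero ξ 0
    simpa [secSigma_zero_right] using h
  set R := ∑ m ∈ Finset.Icc (e + 1 + 1) p.natDegree,
      (Polynomial.taylor α p).coeff m * secSigma (m - 1) ξ μ with hR_def
  set R0 := ∑ m ∈ Finset.Icc (e + 1 + 1) p.natDegree,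
      (Polynomial.taylor α p).coeff m * secSigma (m - 1) ξ 0 with hR0_def
  have hRbound : |R| ≤ C * M ^ (e + 1) := by
    have h := tail_bound p α (e + 1) hxM hyM hMa.le
    rw [hR_def, hC_def]
    exact h
  have hR0bound : |R0| ≤ C * |ξ| ^ (e + 1) := by
    have h := tail_bound p α (e + 1) (le_refl |ξ|) (by simp : |(0 : ℝ)| ≤ |ξ|)
      (hxM.trans hMa.le)
    rw [hR0_def, hC_def]
    exact h
  -- sign facts
  have hxabs : ξ ^ e = |ξ| ^ e := (he.pow_abs ξ).symm
  have hxen : (0 : ℝ) ≤ |ξ| ^ e := pow_nonneg (abs_nonneg ξ) e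
  have h1 : 0 ≤ c * A := by
    have hcR0 : -(|c| * (C * |ξ| ^ (e + 1))) ≤ c * R0 := by
      have habs : |c * R0| ≤ |c| * (C * |ξ| ^ (e + 1)) := by
        rw [abs_mul]
        exact mul_le_mul_of_nonneg_left hR0bound (abs_nonneg c)
      linarith [neg_abs_le (c * R0)]
    have hlt : |c| * C * |ξ| ≤ c ^ 2 := by
      have t1 : |c| * C * |ξ| ≤ (|c| * C + 1) * M := by
        nlinarith [hxM, hM0, abs_nonneg c, hC0, abs_nonneg ξ]
      nlinarith [t1, hMb']
    have hAe : c * A = c ^ 2 * (|ξ| ^ e) + c * R0 := by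
      rw [hA, hxabs]; ring
    have hpowsucc : |ξ| ^ (e + 1) = |ξ| ^ e * |ξ| := pow_succ _ _
    rw [hAe]
    nlinarith [hcR0, hlt, hxen, hpowsucc, abs_nonneg ξ, hC0, abs_nonneg c]
  have h2 : 0 ≤ c * (2 * Q - A) := by
    have hmarg := secSigma_margin he he1 ξ μ
    have hdivpow : (M / (4 * (e : ℝ))) ^ e = M ^ e / P := by
      rw [hP_def, div_pow]
    rw [hdivpow] at hmarg
    have e1 : c ^ 2 * (M ^ e / P) ≤ c ^ 2 * (2 * secSigma e ξ μ - ξ ^ e) :=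
      mul_le_mul_of_nonneg_left hmarg (sq_nonneg c)
    have e2 : -(|c| * (3 * (C * M ^ (e + 1)))) ≤ c * (2 * R - R0) := by
      have habs : |c * (2 * R - R0)| ≤ |c| * (3 * (C * M ^ (e + 1))) := by
        rw [abs_mul]
        refine mul_le_mul_of_nonneg_left ?_ (abs_nonneg c)
        have hR0M : |R0| ≤ C * M ^ (e + 1) := by
          refine hR0bound.trans (mul_le_mul_of_nonneg_left ?_ hC0)
          exact pow_le_pow_left₀ (abs_nonneg ξ) hxM _
        calc |2 * R - R0| ≤ |2 * R| + |R0| := abs_sub _ _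
          _ = 2 * |R| + |R0| := by rw [abs_mul]; norm_num
          _ ≤ 2 * (C * M ^ (e + 1)) + C * M ^ (e + 1) := by linarith
          _ = 3 * (C * M ^ (e + 1)) := by ring
      linarith [neg_abs_le (c * (2 * R - R0))]
    have e3 : |c| * (3 * (C * M ^ (e + 1))) ≤ c ^ 2 * (M ^ e / P) := by
      have t : 3 * |c| * C * M * P ≤ c ^ 2 := by
        nlinarith [hMc', hP, hC0, abs_nonneg c, hM0, mul_nonneg (mul_nonneg (mul_nonneg
          (by norm_num : (0:ℝ) ≤ 3) (abs_nonneg c)) hC0) hM0]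
      have hpowsucc : M ^ (e + 1) = M ^ e * M := pow_succ _ _
      calc |c| * (3 * (C * M ^ (e + 1))) = (3 * |c| * C * M) * M ^ e := by
            rw [hpowsucc]; ring
        _ ≤ (c ^ 2 / P) * M ^ e := by
            refine mul_le_mul_of_nonneg_right ?_ (pow_nonneg hM0 e)
            rw [le_div_iff₀ hP]
            linarith [t]
        _ = c ^ 2 * (M ^ e / P) := by ring
    have hexp : c * (2 * Q - A) = c ^ 2 * (2 * secSigma e ξ μ - ξ ^ e) + c * (2 * R - R0) := by
      rw [hQ, hA]; ring
    rw [hexp]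
    linarith [e1, e2, e3]
  have hprod : 0 ≤ (c * A) * (c * (2 * Q - A)) := mul_nonneg h1 h2
  have hQA : (Q - A) ^ 2 ≤ Q ^ 2 := by nlinarith [hprod, hc2]
  -- the divided difference identities
  have i1 : (ξ - μ) * Q = p.eval (α + ξ) - p.eval (α + μ) := secG_mul p α ξ μ
  have i2 : ξ * A = p.eval (α + ξ) - p.eval α := by
    have h := secG_mul p α ξ 0
    simpa using h
  have hN : (α + μ) * Q - p.eval (α + μ) - α * Q = ξ * (Q - A) := by
    linear_combination (-1 : ℝ) * i1 + i2 - hpα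
  rw [hN]
  have hsimp : α + ξ * (Q - A) / Q - α = ξ * (Q - A) / Q := by ring
  rw [hsimp]
  apply Real.sqrt_le_sqrt
  have hQ2 : 0 < Q ^ 2 := lt_of_le_of_ne (sq_nonneg Q) (Ne.symm (pow_ne_zero 2 hQne))
  have hfin : (ξ * (Q - A) / Q) ^ 2 ≤ ξ ^ 2 := by
    rw [div_pow, mul_pow, div_le_iff₀ hQ2]
    calc ξ ^ 2 * (Q - A) ^ 2 ≤ ξ ^ 2 * Q ^ 2 := mul_le_mul_of_nonneg_left hQA (sq_nonneg ξ)
      _ = ξ ^ 2 * Q ^ 2 := rfl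
  linarith
end
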